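/- arXiv:1801.02957 — 2 statements merged into one kernel-verified Lean document; each statement's English description precedes it below -/
import Mathlib

section
/- Let A, B ∈ ℤ with 0 < A ≤ B, B ≥ 2 and 2A − B ≥ 5 (so A ≥ 5), let M = [[0, −B], [1, −A]] acting on ℝ², let T be the tile for M and digits {0, …, B−1}·e₁, and let D₁, D₂ be defined by the lexicographic digit conditions below. Then D₁ and D₂ are compact subsets of T and T = D₁ ∪ D₂. -/
noncomputable section

/-- The matrix `[[0, -B], [1, -A]]` as a real matrix. -/
def M' (A B : ℤ) : Matrix (Fin 2) (Fin 2) ℝ := !![0, -(B : ℝ); 1, -(A : ℝ)]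

/-- `e₁ = (1, 0) ∈ ℝ²`. -/
def e1 : Fin 2 → ℝ := ![1, 0]

/-- The flipped digit sequence: here `a n` denotes the digit `a_{n+1}` (so the
index `j = n + 1` is odd exactly when `n` is even), and the flipped sequence is
`b_j = a_j` for odd `j` and `b_j = B - 1 - a_j` for even `j`. -/
def flipSeq (B : ℤ) (a : ℕ → ℤ) : ℕ → ℤ :=
  fun n => if n % 2 = 0 then a n else B - 1 - a n

/-- `D₁`: points whose flipped digit sequence is lexicographically `≤` the
constant sequence `(A-3, A-3, …)`. -/
def D1 (A B : ℤ) : Set (Fin 2 → ℝ) :=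
  {x | ∃ a : ℕ → ℤ, (∀ n, a n ∈ Set.Icc (0 : ℤ) (B - 1)) ∧
    (∀ n : ℕ, (∀ m < n, flipSeq B a m = A - 3) → flipSeq B a n ≤ A - 3) ∧
    x = ∑' n : ℕ, ((M' A B)⁻¹ ^ (n + 1)).mulVec ((a n : ℝ) • e1)}

/-- `D₂`: points whose flipped digit sequence is lexicographically `≥` the
constant sequence `(A-3, A-3, …)`. -/
def D2 (A B : ℤ) : Set (Fin 2 → ℝ) :=
  {x | ∃ a : ℕ → ℤ, (∀ n, a n ∈ Set.Icc (0 : ℤ) (B - 1)) ∧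
    (∀ n : ℕ, (∀ m < n, flipSeq B a m = A - 3) → A - 3 ≤ flipSeq B a n) ∧
    x = ∑' n : ℕ, ((M' A B)⁻¹ ^ (n + 1)).mulVec ((a n : ℝ) • e1)}


/-! The inverse `N = M⁻¹` satisfies `B N² + A N + 1 = 0`, and when `2A - B ≥ 5` this quadratic
has two distinct real roots in `(-1, 1)`, so `‖Nⁿ‖` decays geometrically. The tile equation reads
`T = ⋃ⱼ N (T + j e₁)`, which makes `T` exactly the set of digit expansions `∑ Nⁿ⁺¹ (aₙ e₁)`; the
expansion map is continuous on the compact space of digit sequences. `D₁` and `D₂` are images of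
closed sets of digit sequences, and every flipped sequence is lexicographically comparable with
`(A - 3, A - 3, …)`. -/

open Filter Topology
open scoped Matrix

section PowerBound

variable {𝕜 R : Type*} [NormedField 𝕜] [SeminormedRing R] [NormedAlgebra 𝕜 R]

theorem sub_smul_pow_eq_of_mul_self_eq {a : R} {μ ν : 𝕜}
    (ha : a * a = (μ + ν) • a - (μ * ν) • 1) (n : ℕ) :
    (μ - ν) • a ^ n = μ ^ n • (a - ν • 1) - ν ^ n • (a - μ • 1) := by
  induction n using Nat.twoStepInduction with
  | zero => simp only [pow_zero, one_smul]; module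
  | one => simp only [pow_one]; module
  | more n ih₀ ih₁ =>
    have hrec : a ^ (n + 2) = (μ + ν) • a ^ (n + 1) - (μ * ν) • a ^ n := by
      rw [pow_add, sq, ha, mul_sub, mul_smul_comm, mul_smul_comm, mul_one, pow_succ]
    rw [hrec, smul_sub, smul_comm (μ - ν) (μ + ν), smul_comm (μ - ν) (μ * ν), ih₀, ih₁]
    module

theorem summable_norm_pow_of_mul_self_eq {a : R} {μ ν : 𝕜} (hμ : ‖μ‖ < 1) (hν : ‖ν‖ < 1)
    (hne : μ ≠ ν) (ha : a * a = (μ + ν) • a - (μ * ν) • 1) :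
    Summable fun n => ‖a ^ n‖ := by
  have hd : μ - ν ≠ 0 := sub_ne_zero.mpr hne
  refine Summable.of_nonneg_of_le (fun _ => norm_nonneg _) (fun n => ?_)
    ((((summable_geometric_of_lt_one (norm_nonneg μ) hμ).mul_right ‖a - ν • 1‖).add
      ((summable_geometric_of_lt_one (norm_nonneg ν) hν).mul_right ‖a - μ • 1‖)).mul_left
      ‖μ - ν‖⁻¹)
  have h := congrArg (‖·‖) (sub_smul_pow_eq_of_mul_self_eq ha n)
  simp only [norm_smul] at h
  rw [le_inv_mul_iff₀ (norm_pos_iff.mpr hd), h]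
  calc _ ≤ ‖μ ^ n • (a - ν • 1)‖ + ‖ν ^ n • (a - μ • 1)‖ := norm_sub_le _ _
    _ ≤ _ := by simp only [norm_smul, norm_pow]; rfl

end PowerBound

theorem exists_roots_abs_lt_one {a b : ℝ} (ha : 0 < a) (hab : a ≤ b) (hdisc : 4 * b < a ^ 2) :
    ∃ μ ν : ℝ, μ ≠ ν ∧ |μ| < 1 ∧ |ν| < 1 ∧ μ + ν = -a / b ∧ μ * ν = 1 / b := by
  have hb : 0 < b := ha.trans_le hab
  obtain ⟨s, hs0, hs⟩ : ∃ s : ℝ, 0 < s ∧ s ^ 2 = a ^ 2 - 4 * b :=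
    ⟨√(a ^ 2 - 4 * b), by positivity, Real.sq_sqrt (by linarith)⟩
  have hsa : s < a := by nlinarith
  have hsb : s < 2 * b - a := by nlinarith
  refine ⟨(-a + s) / (2 * b), (-a - s) / (2 * b), ?_, ?_, ?_, ?_, ?_⟩
  · intro h; field_simp at h; linarith
  · rw [abs_div, abs_of_pos (by positivity : (0 : ℝ) < 2 * b), div_lt_one (by positivity),
      abs_lt]; constructor <;> linarith
  · rw [abs_div, abs_of_pos (by positivity : (0 : ℝ) < 2 * b), div_lt_one (by positivity),
      abs_lt]; constructor <;> linarith
  · field_simp; ring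
  · field_simp; linear_combination (-1) * hs

section DigitExpansion

variable {𝕜 E ι : Type*} [NontriviallyNormedField 𝕜] [NormedAddCommGroup E] [NormedSpace 𝕜 E]
  (L : E →L[𝕜] E) (δ : ι → E)

def digitSum (σ : ℕ → ι) : E := ∑' n, (L ^ (n + 1)) (δ (σ n))

variable {L δ}

theorem tendsto_pow_apply_zero (hL : Summable fun n => ‖L ^ n‖) {x : ℕ → E} {R : ℝ}
    (hx : ∀ k, ‖x k‖ ≤ R) : Tendsto (fun k => (L ^ k) (x k)) atTop (𝓝 0) := by
  refine squeeze_zero_norm (fun k => ?_) (by simpa using hL.tendsto_atTop_zero.mul_const R)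
  exact (L ^ k).le_opNorm_of_le (hx k)

theorem exists_summable_majorant_digitSum [Finite ι] (hL : Summable fun n => ‖L ^ n‖) :
    ∃ u : ℕ → ℝ, Summable u ∧ ∀ n (σ : ℕ → ι), ‖(L ^ (n + 1)) (δ (σ n))‖ ≤ u n := by
  obtain ⟨R, hR⟩ := Finite.bddAbove_range fun i => ‖δ i‖
  exact ⟨fun n => ‖L ^ (n + 1)‖ * R, ((summable_nat_add_iff 1).mpr hL).mul_right R,
    fun n σ => (L ^ (n + 1)).le_opNorm_of_le (hR ⟨σ n, rfl⟩)⟩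

theorem sum_range_add_pow_apply_mem {T : Set E} (hT : T = ⋃ i, (fun y => L (y + δ i)) '' T)
    {t : E} (ht : t ∈ T) (k : ℕ) (σ : ℕ → ι) :
    ∑ n ∈ Finset.range k, (L ^ (n + 1)) (δ (σ n)) + (L ^ k) t ∈ T := by
  induction k generalizing σ with
  | zero => simpa using ht
  | succ k ih =>
    have hmem : L ((∑ n ∈ Finset.range k, (L ^ (n + 1)) (δ (σ (n + 1))) + (L ^ k) t) +
        δ (σ 0)) ∈ T := by
      rw [hT]; exact Set.mem_iUnion.2 ⟨σ 0, _, ih _, rfl⟩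
    convert hmem using 1
    simp only [Finset.sum_range_succ', pow_succ', mul_apply_eq_comp, map_add,
      map_sum, pow_zero, one_apply_eq_self]
    abel

variable [CompleteSpace E] [Finite ι]

theorem hasSum_digitSum (hL : Summable fun n => ‖L ^ n‖) (σ : ℕ → ι) :
    HasSum (fun n => (L ^ (n + 1)) (δ (σ n))) (digitSum L δ σ) := by
  obtain ⟨u, hu, hbound⟩ := exists_summable_majorant_digitSum (δ := δ) hL
  exact (Summable.of_norm_bounded hu (hbound · σ)).hasSum

theorem continuous_digitSum [TopologicalSpace ι] [DiscreteTopology ι]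
    (hL : Summable fun n => ‖L ^ n‖) : Continuous (digitSum L δ) := by
  obtain ⟨u, hu, hbound⟩ := exists_summable_majorant_digitSum (δ := δ) hL
  exact continuous_tsum (fun n => (continuous_of_discreteTopology (f := fun i =>
    (L ^ (n + 1)) (δ i))).comp (continuous_apply n)) hu hbound

theorem digitSum_mem {T : Set E} (hT : T = ⋃ i, (fun y => L (y + δ i)) '' T)
    (hL : Summable fun n => ‖L ^ n‖) (hTc : IsClosed T) (hTne : T.Nonempty) (σ : ℕ → ι) :
    digitSum L δ σ ∈ T := by
  obtain ⟨t, ht⟩ := hTne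
  have hlim : Tendsto (fun k => ∑ n ∈ Finset.range k, (L ^ (n + 1)) (δ (σ n)) + (L ^ k) t)
      atTop (𝓝 (digitSum L δ σ)) := by
    simpa using (hasSum_digitSum hL σ).tendsto_sum_nat.add
      (tendsto_pow_apply_zero hL (x := fun _ => t) fun _ => le_rfl)
  exact hTc.mem_of_tendsto hlim (Eventually.of_forall (sum_range_add_pow_apply_mem hT ht · σ))

theorem exists_digitSum_eq {T : Set E} (hT : T = ⋃ i, (fun y => L (y + δ i)) '' T)
    (hL : Summable fun n => ‖L ^ n‖) (hTb : Bornology.IsBounded T)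
    {x : E} (hx : x ∈ T) : ∃ σ, digitSum L δ σ = x := by
  have hstep : ∀ y ∈ T, ∃ i, ∃ z ∈ T, L (z + δ i) = y := by
    intro y hy
    rw [hT] at hy
    simpa using hy
  have : Nonempty ι := let ⟨i, _⟩ := hstep x hx; ⟨i⟩
  choose! digit next hnext hdigit using hstep
  set orbit : ℕ → E := fun k => next^[k] x
  have horbit_succ (k : ℕ) : orbit (k + 1) = next (orbit k) := Function.iterate_succ_apply' ..
  have horbit (k : ℕ) : orbit k ∈ T := by
    induction k with
    | zero => exact hx
    | succ k ih => rw [horbit_succ]; exact hnext _ ih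
  refine ⟨fun k => digit (orbit k), ?_⟩
  have hexp (k : ℕ) : ∑ n ∈ Finset.range k, (L ^ (n + 1)) (δ (digit (orbit n))) +
      (L ^ k) (orbit k) = x := by
    induction k with
    | zero => simp [orbit]
    | succ k ih =>
      rw [← ih, Finset.sum_range_succ, add_assoc]
      congr 1
      conv_rhs => rw [← hdigit _ (horbit k)]
      simp only [pow_succ, mul_apply_eq_comp, map_add, horbit_succ, add_comm]
  obtain ⟨R, hR⟩ := hTb.exists_norm_le
  have hlim := (tendsto_pow_apply_zero hL fun k => hR _ (horbit k)).const_sub x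
  rw [sub_zero] at hlim
  exact tendsto_nhds_unique (hasSum_digitSum hL _).tendsto_sum_nat
    (hlim.congr fun k => (eq_sub_of_add_eq (hexp k)).symm)

theorem range_digitSum {T : Set E} (hT : T = ⋃ i, (fun y => L (y + δ i)) '' T)
    (hL : Summable fun n => ‖L ^ n‖) (hTc : IsCompact T) (hTne : T.Nonempty) :
    Set.range (digitSum L δ) = T :=
  (Set.range_subset_iff.2 (digitSum_mem hT hL hTc.isClosed hTne)).antisymm
    fun _ hx => exists_digitSum_eq hT hL hTc.isBounded hx

end DigitExpansion

theorem isClosed_setOf_forall_lt_imp {ι : Type*} [TopologicalSpace ι] [DiscreteTopology ι]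
    (P Q : ℕ → ι → Prop) :
    IsClosed {σ : ℕ → ι | ∀ n, (∀ m < n, P m (σ m)) → Q n (σ n)} := by
  simp only [Set.ofPred_forall]
  refine isClosed_iInter fun n => isClosed_imp ?_ ?_
  · have : {σ : ℕ → ι | ∀ m < n, P m (σ m)} = ⋂ m ∈ Set.Iio n, {σ | P m (σ m)} := by
      ext; simp
    rw [this]
    exact (Set.finite_Iio n).isOpen_biInter fun m _ =>
      (isOpen_discrete _).preimage (continuous_apply m)
  · exact (isClosed_discrete _).preimage (continuous_apply n)

theorem forall_lt_imp_le_or_forall_lt_imp_ge {α : Type*} [LinearOrder α] (b : ℕ → α) (c : α) :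
    (∀ n, (∀ m < n, b m = c) → b n ≤ c) ∨ (∀ n, (∀ m < n, b m = c) → c ≤ b n) := by
  by_contra! ⟨⟨n₁, hn₁, h₁⟩, ⟨n₂, hn₂, h₂⟩⟩
  rcases lt_trichotomy n₁ n₂ with h | rfl | h
  · exact h₁.ne' (hn₂ n₁ h)
  · exact h₁.not_gt h₂
  · exact h₂.ne (hn₁ n₂ h)

section Tile

variable (A B : ℤ)

theorem det_M' : (M' A B).det = B := by simp [M', Matrix.det_fin_two_of]

theorem inv_M' (hB : (B : ℝ) ≠ 0) : (M' A B)⁻¹ = !![-(A : ℝ) / B, 1; -1 / B, 0] :=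
  Matrix.inv_eq_right_inv <| by
    ext i j
    fin_cases i <;> fin_cases j <;> simp [M'] <;> field_simp
    ring

theorem inv_M'_mul_self (hB : (B : ℝ) ≠ 0) :
    (M' A B)⁻¹ * (M' A B)⁻¹ = (-(A : ℝ) / B) • (M' A B)⁻¹ - (1 / (B : ℝ)) • 1 := by
  rw [inv_M' A B hB]
  ext i j
  fin_cases i <;> fin_cases j <;> simp [Matrix.mul_apply] <;> field_simp
  ring

def invCLM : (Fin 2 → ℝ) →L[ℝ] (Fin 2 → ℝ) :=
  LinearMap.toContinuousLinearMap (Matrix.toLin' (M' A B)⁻¹)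

theorem invCLM_pow_apply (n : ℕ) (v : Fin 2 → ℝ) :
    (invCLM A B ^ n) v = ((M' A B)⁻¹ ^ n) *ᵥ v := by
  induction n generalizing v with
  | zero => simp
  | succ n ih =>
    rw [pow_succ, pow_succ, ← Matrix.mulVec_mulVec, ← ih]
    simp [invCLM, mul_apply_eq_comp]

theorem invCLM_mulVec (hB : (B : ℝ) ≠ 0) (v : Fin 2 → ℝ) : invCLM A B (M' A B *ᵥ v) = v := by
  have hdet : IsUnit (M' A B).det := det_M' A B ▸ hB.isUnit
  rw [← pow_one (invCLM A B), invCLM_pow_apply, pow_one, Matrix.mulVec_mulVec,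
    Matrix.nonsing_inv_mul _ hdet, Matrix.one_mulVec]

theorem summable_norm_invCLM_pow (hAB : A ≤ B) (h5 : 5 ≤ 2 * A - B) :
    Summable fun n => ‖invCLM A B ^ n‖ := by
  have hA : (0 : ℝ) < A := by exact_mod_cast (by omega : 0 < A)
  have hdisc : 4 * (B : ℝ) < (A : ℝ) ^ 2 := by
    have : 4 * B < A ^ 2 := by nlinarith
    exact_mod_cast this
  have hB : (B : ℝ) ≠ 0 := (hA.trans_le (by exact_mod_cast hAB)).ne'
  obtain ⟨μ, ν, hne, hμ, hν, hsum, hprod⟩ := exists_roots_abs_lt_one hA (by exact_mod_cast hAB) hdisc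
  refine summable_norm_pow_of_mul_self_eq hμ hν hne (ContinuousLinearMap.ext fun v => ?_)
  rw [hsum, hprod, ← sq, invCLM_pow_apply, sq, inv_M'_mul_self A B hB]
  simp [invCLM, Matrix.sub_mulVec, Matrix.smul_mulVec]

def digitVec (j : Set.Icc (0 : ℤ) (B - 1)) : Fin 2 → ℝ := ((j : ℤ) : ℝ) • e1

theorem tile_eq_iUnion (hB : (B : ℝ) ≠ 0) {T : Set (Fin 2 → ℝ)}
    (hT : (M' A B).mulVec '' T =
      ⋃ j ∈ Set.Icc (0 : ℤ) (B - 1), (fun x => x + (j : ℝ) • e1) '' T) :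
    T = ⋃ j, (fun y => invCLM A B (y + digitVec B j)) '' T := by
  ext x
  simp only [Set.mem_iUnion, Set.mem_image, Subtype.exists, digitVec]
  constructor
  · intro hx
    have hMx : M' A B *ᵥ x ∈ ⋃ j ∈ Set.Icc (0 : ℤ) (B - 1), (fun x => x + (j : ℝ) • e1) '' T :=
      hT ▸ Set.mem_image_of_mem _ hx
    obtain ⟨j, hj, y, hy, hyx⟩ := by
      simpa only [Set.mem_iUnion, Set.mem_image, exists_prop] using hMx
    exact ⟨j, hj, y, hy, by rw [hyx, invCLM_mulVec A B hB]⟩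
  · rintro ⟨j, hj, y, hy, rfl⟩
    obtain ⟨z, hz, hzy⟩ : y + (j : ℝ) • e1 ∈ (M' A B).mulVec '' T :=
      hT ▸ Set.mem_biUnion hj ⟨y, hy, rfl⟩
    rwa [← hzy, invCLM_mulVec A B hB]

def lexSet (R : ℤ → Prop) : Set (Fin 2 → ℝ) :=
  {x | ∃ a : ℕ → ℤ, (∀ n, a n ∈ Set.Icc (0 : ℤ) (B - 1)) ∧
    (∀ n : ℕ, (∀ m < n, flipSeq B a m = A - 3) → R (flipSeq B a n)) ∧
    x = ∑' n : ℕ, ((M' A B)⁻¹ ^ (n + 1)).mulVec ((a n : ℝ) • e1)}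

theorem lexSet_eq_image (R : ℤ → Prop) :
    lexSet A B R = digitSum (invCLM A B) (digitVec B) '' {σ | ∀ n,
      (∀ m < n, flipSeq B (fun k => (σ k : ℤ)) m = A - 3) → R (flipSeq B (fun k => σ k) n)} := by
  ext x
  constructor
  · rintro ⟨a, ha, hlex, rfl⟩
    exact ⟨fun n => ⟨a n, ha n⟩, hlex, by simp only [digitSum, digitVec, invCLM_pow_apply]⟩
  · rintro ⟨σ, hσ, rfl⟩
    exact ⟨fun n => σ n, fun n => (σ n).2, hσ,
      by simp only [digitSum, digitVec, invCLM_pow_apply]⟩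

theorem isCompact_lexSet (hAB : A ≤ B) (h5 : 5 ≤ 2 * A - B) (R : ℤ → Prop) :
    IsCompact (lexSet A B R) := by
  rw [lexSet_eq_image]
  exact (isClosed_setOf_forall_lt_imp
    (fun m (j : Set.Icc (0 : ℤ) (B - 1)) => flipSeq B (fun _ => j) m = A - 3)
    (fun n j => R (flipSeq B (fun _ => j) n))).isCompact.image
      (continuous_digitSum (summable_norm_invCLM_pow A B hAB h5))

theorem lexSet_subset_range (R : ℤ → Prop) :
    lexSet A B R ⊆ Set.range (digitSum (invCLM A B) (digitVec B)) := by
  rw [lexSet_eq_image]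
  exact Set.image_subset_range _ _

theorem range_subset_lexSet_union :
    Set.range (digitSum (invCLM A B) (digitVec B)) ⊆
      lexSet A B (· ≤ A - 3) ∪ lexSet A B (A - 3 ≤ ·) := by
  rw [lexSet_eq_image, lexSet_eq_image]
  rintro _ ⟨σ, rfl⟩
  exact (forall_lt_imp_le_or_forall_lt_imp_ge (flipSeq B fun k => σ k) (A - 3)).imp
    (fun h => ⟨σ, h, rfl⟩) (fun h => ⟨σ, h, rfl⟩)

theorem D1_eq_lexSet : D1 A B = lexSet A B (· ≤ A - 3) := rfl

theorem D2_eq_lexSet : D2 A B = lexSet A B (A - 3 ≤ ·) := rfl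

end Tile

theorem D1_D2_compact_cover_general
    (A B : ℤ) (hAB : A ≤ B) (h5 : 5 ≤ 2 * A - B)
    (T : Set (Fin 2 → ℝ)) (hTne : T.Nonempty) (hTcp : IsCompact T)
    (hT : (M' A B).mulVec '' T =
      ⋃ j ∈ Set.Icc (0 : ℤ) (B - 1), (fun x => x + (j : ℝ) • e1) '' T) :
    IsCompact (D1 A B) ∧ IsCompact (D2 A B) ∧
      D1 A B ⊆ T ∧ D2 A B ⊆ T ∧ T = D1 A B ∪ D2 A B := by
  have hB : (B : ℝ) ≠ 0 := by exact_mod_cast (by omega : B ≠ 0)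
  have hrange : Set.range (digitSum (invCLM A B) (digitVec B)) = T :=
    range_digitSum (tile_eq_iUnion A B hB hT) (summable_norm_invCLM_pow A B hAB h5) hTcp hTne
  rw [D1_eq_lexSet, D2_eq_lexSet, ← hrange]
  exact ⟨isCompact_lexSet A B hAB h5 _, isCompact_lexSet A B hAB h5 _,
    lexSet_subset_range A B _, lexSet_subset_range A B _,
    (range_subset_lexSet_union A B).antisymm
      (Set.union_subset (lexSet_subset_range A B _) (lexSet_subset_range A B _))⟩

/-- For `0 < A ≤ B`, `B ≥ 2`, `2A - B ≥ 5`, the sets `D₁` and `D₂`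
are compact subsets of the tile `T` and `T = D₁ ∪ D₂`. -/
theorem D1_D2_compact_cover
    (A B : ℤ) (hA : 0 < A) (hAB : A ≤ B) (hB : 2 ≤ B) (h5 : 5 ≤ 2 * A - B)
    (T : Set (Fin 2 → ℝ)) (hTne : T.Nonempty) (hTcp : IsCompact T)
    (hT : (M' A B).mulVec '' T =
      ⋃ j ∈ Set.Icc (0 : ℤ) (B - 1), (fun x => x + (j : ℝ) • e1) '' T) :
    IsCompact (D1 A B) ∧ IsCompact (D2 A B) ∧
      D1 A B ⊆ T ∧ D2 A B ⊆ T ∧ T = D1 A B ∪ D2 A B :=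
  D1_D2_compact_cover_general A B hAB h5 T hTne hTcp hT
end
end

section
/- Let A, B ∈ ℤ with B ≥ 2 and 2A − B = 3, and let M = [[0, −B], [1, −A]] acting on ℝ². For any integers a₁, a₂, a₃, a₁', a₂', a₃' with a₁ − a₁' = 1, a₂ − a₂' = A−2 and a₃ − a₃' = −1, the following identity of points of ℝ² holds: M⁻¹·(a₁·e₁) + M⁻²·(a₂·e₁) + M⁻³·(a₃·e₁) + (B−1)·Σ_{k≥0} M^{−(5+2k)}·e₁ = M⁻¹·(a₁'·e₁) + M⁻²·(a₂'·e₁) + M⁻³·(a₃'·e₁) + (B−1)·Σ_{k≥0} M^{−(4+2k)}·e₁. (In digit notation: 0.a₁a₂a₃ with periodic tail 0,(B−1),0,(B−1),… equals 0.a₁'a₂'a₃' with periodic tail (B−1),0,(B−1),0,….) -/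
/-!
Write `N = M⁻¹` and `S = ∑ₖ N^{2k} e₁`. The two tails are `N⁵ S` and `N⁴ S`, and
`S = e₁ + N² S`. Substituting `e₁ = S - N² S` turns the difference of the two sides into a
combination of the vectors `N^k S`; it is the sum of three instances of the recurrence
`B N^{k+2} + A N^{k+1} + N^k = 0` (Cayley–Hamilton for `M`, multiplied by `N^{k+2}`) and of
`(2A - B - 3) (N³ S - N⁴ S)`.

Summability comes from the same recurrence: `N²` satisfies `Y² = s Y + p` with
`s = (A² - 2B) / B²`, `p = -1 / B²` and `|s| + |p| < 1`, so the norms of `N^{2k} v` are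
dominated by a geometric sequence.
-/
noncomputable section

open Matrix Polynomial

lemma le_mul_pow_of_two_step_le {u : ℕ → ℝ} {τ δ γ C : ℝ} (hτ : 0 ≤ τ) (hδ : 0 ≤ δ)
    (hC : 0 ≤ C) (hγ : 0 ≤ γ) (hγτδ : τ * γ + δ ≤ γ ^ 2) (h0 : u 0 ≤ C) (h1 : u 1 ≤ C * γ)
    (hu : ∀ k, u (k + 2) ≤ τ * u (k + 1) + δ * u k) (n : ℕ) : u n ≤ C * γ ^ n := by
  induction n using Nat.twoStepInduction with
  | zero => simpa using h0
  | one => simpa using h1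
  | more k ih₀ ih₁ =>
    calc u (k + 2) ≤ τ * u (k + 1) + δ * u k := hu k
      _ ≤ τ * (C * γ ^ (k + 1)) + δ * (C * γ ^ k) := by gcongr
      _ = C * γ ^ k * (τ * γ + δ) := by ring
      _ ≤ C * γ ^ k * γ ^ 2 := by gcongr
      _ = C * γ ^ (k + 2) := by ring

lemma summable_of_norm_le_two_step {E : Type*} [NormedAddCommGroup E] [CompleteSpace E]
    {f : ℕ → E} {τ δ : ℝ} (hτ : 0 ≤ τ) (hδ : 0 ≤ δ) (hτδ : τ + δ < 1)
    (hf : ∀ k, ‖f (k + 2)‖ ≤ τ * ‖f (k + 1)‖ + δ * ‖f k‖) : Summable f := by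
  -- `γ = √(τ + δ)` already satisfies `τ γ + δ ≤ γ²`; the `max` only keeps `γ` positive.
  set γ := max √(τ + δ) (1 / 2)
  have hγ0 : 0 < γ := lt_max_of_lt_right (by norm_num)
  have hγ1 : γ < 1 := max_lt ((Real.sqrt_lt' one_pos).2 (by rwa [one_pow])) (by norm_num)
  have hγτδ : τ * γ + δ ≤ γ ^ 2 :=
    calc τ * γ + δ ≤ τ + δ := by nlinarith
      _ = √(τ + δ) ^ 2 := (Real.sq_sqrt (by positivity)).symm
      _ ≤ γ ^ 2 := by gcongr; exact le_max_left _ _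
  have hbound := le_mul_pow_of_two_step_le (u := fun k ↦ ‖f k‖) (C := ‖f 0‖ + ‖f 1‖ / γ)
    hτ hδ (by positivity) hγ0.le hγτδ (le_add_of_nonneg_right (by positivity))
    (by rw [add_mul, div_mul_cancel₀ _ hγ0.ne']; nlinarith [norm_nonneg (f 0)]) hf
  exact .of_norm_bounded ((summable_geometric_of_lt_one hγ0.le hγ1).mul_left _) hbound

section MatrixSeries

variable {n : Type*} [Fintype n]

lemma Matrix.mulVec_tsum {m ι : Type*} (X : Matrix m n ℝ) {f : ι → n → ℝ} (hf : Summable f) :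
    X *ᵥ ∑' i, f i = ∑' i, X *ᵥ f i :=
  hf.map_tsum (mulVecLin X) (continuous_const.matrix_mulVec continuous_id)

variable [DecidableEq n]

lemma summable_pow_mulVec_of_sq_eq {Q : Matrix n n ℝ} {s p : ℝ} (hQ : Q ^ 2 = s • Q + p • 1)
    (hsp : |s| + |p| < 1) (v : n → ℝ) : Summable fun k ↦ Q ^ k *ᵥ v := by
  refine summable_of_norm_le_two_step (abs_nonneg s) (abs_nonneg p) hsp fun k ↦ ?_
  have hrec : Q ^ (k + 2) *ᵥ v = s • (Q ^ (k + 1) *ᵥ v) + p • (Q ^ k *ᵥ v) := by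
    rw [pow_add, hQ, mul_add, mul_smul_comm, mul_smul_comm, mul_one, ← pow_succ, add_mulVec,
      smul_mulVec, smul_mulVec]
  rw [hrec]
  refine (norm_add_le _ _).trans_eq ?_
  rw [norm_smul, norm_smul, Real.norm_eq_abs, Real.norm_eq_abs]

lemma tsum_pow_mulVec_eq_add {Q : Matrix n n ℝ} {v : n → ℝ}
    (hf : Summable fun k ↦ Q ^ k *ᵥ v) :
    ∑' k, Q ^ k *ᵥ v = v + Q *ᵥ ∑' k, Q ^ k *ᵥ v := by
  rw [Q.mulVec_tsum hf, hf.tsum_eq_zero_add]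
  simp only [pow_zero, one_mulVec, pow_succ', mulVec_mulVec]

lemma tsum_pow_add_two_mul_mulVec {N : Matrix n n ℝ} {v : n → ℝ}
    (hf : Summable fun k ↦ (N ^ 2) ^ k *ᵥ v) (j : ℕ) :
    ∑' k, N ^ (j + 2 * k) *ᵥ v = N ^ j *ᵥ ∑' k, (N ^ 2) ^ k *ᵥ v := by
  simp only [(N ^ j).mulVec_tsum hf, mulVec_mulVec, pow_add, pow_mul]

end MatrixSeries

section QuadraticRelation

variable {n : Type*} [Fintype n] [DecidableEq n] {N : Matrix n n ℝ} {a b : ℝ}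

lemma smul_inv_sq_add_smul_inv_add_one_eq_zero {P : Matrix n n ℝ} (hP : IsUnit P.det)
    (h : P ^ 2 + a • P + b • 1 = 0) : b • P⁻¹ ^ 2 + a • P⁻¹ + 1 = 0 := by
  have hPP : P⁻¹ * P = 1 := nonsing_inv_mul P hP
  have h₁ : P⁻¹ ^ 2 * P = P⁻¹ := by rw [sq, mul_assoc, hPP, mul_one]
  have h₂ : P⁻¹ ^ 2 * P ^ 2 = 1 := by rw [sq P, ← mul_assoc, h₁, hPP]
  have h' := congrArg (P⁻¹ ^ 2 * ·) h
  simp only [mul_add, mul_smul_comm, h₁, h₂, mul_one, mul_zero] at h'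
  linear_combination (norm := module) h'

lemma smul_pow_add_two_add_eq_zero (hN : b • N ^ 2 + a • N + 1 = 0) (k : ℕ) :
    b • N ^ (k + 2) + a • N ^ (k + 1) + N ^ k = 0 := by
  simpa [mul_add, mul_smul_comm, ← pow_succ, ← pow_add] using congrArg (N ^ k * ·) hN

lemma sq_sq_eq_of_smul_sq_add (hN : b • N ^ 2 + a • N + 1 = 0) (hb : b ≠ 0) :
    (N ^ 2) ^ 2 = ((a ^ 2 - 2 * b) / b ^ 2) • N ^ 2 + (-1 / b ^ 2) • 1 := by
  have h₁ : b • N ^ 3 + a • N ^ 2 + N = 0 := by simpa using smul_pow_add_two_add_eq_zero hN 1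
  have h₂ : b • (N ^ 2) ^ 2 + a • N ^ 3 + N ^ 2 = 0 := by
    simpa [← pow_mul] using smul_pow_add_two_add_eq_zero hN 2
  have hb2 : b ^ 2 ≠ 0 := pow_ne_zero 2 hb
  rw [← smul_right_inj hb2, smul_add, smul_smul, smul_smul, mul_div_cancel₀ _ hb2,
    mul_div_cancel₀ _ hb2]
  linear_combination (norm := module) b • h₂ - a • h₁ + hN

lemma carry_identity (hN : b • N ^ 2 + a • N + 1 = 0) (hab : 2 * a - b = 3) {v S : n → ℝ}
    (hS : S = v + N ^ 2 *ᵥ S) :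
    N ^ 1 *ᵥ v + (a - 2) • (N ^ 2 *ᵥ v) - N ^ 3 *ᵥ v = (b - 1) • (N ^ 4 *ᵥ S - N ^ 5 *ᵥ S) := by
  have w (k : ℕ) : b • (N ^ (k + 2) *ᵥ S) + a • (N ^ (k + 1) *ᵥ S) + N ^ k *ᵥ S = 0 := by
    simpa [add_mulVec, smul_mulVec] using congrArg (· *ᵥ S) (smul_pow_add_two_add_eq_zero hN k)
  obtain rfl : v = S - N ^ 2 *ᵥ S := eq_sub_of_add_eq hS.symm
  simp only [mulVec_sub, mulVec_mulVec, ← pow_add, Nat.reduceAdd]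
  linear_combination (norm := module) w 1 - (2 : ℝ) • w 2 + w 3 + hab • (N ^ 3 *ᵥ S - N ^ 4 *ᵥ S)

end QuadraticRelation

lemma M'_det (A B : ℤ) : (M' A B).det = B := by simp [M', det_fin_two_of]

lemma M'_trace (A B : ℤ) : (M' A B).trace = -A := by simp [M', trace_fin_two]

lemma M'_sq_add_smul_add_smul_eq_zero (A B : ℤ) :
    M' A B ^ 2 + (A : ℝ) • M' A B + (B : ℝ) • 1 = 0 := by
  have h := aeval_self_charpoly (M' A B)
  rw [charpoly_fin_two, M'_det, M'_trace] at h
  simp only [map_add, map_sub, map_mul, map_pow, aeval_X, aeval_C, ← Algebra.smul_def] at h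
  rwa [Algebra.algebraMap_eq_smul_one, neg_smul, sub_neg_eq_add] at h

/-- For `B ≥ 2`, `2A - B = 3` and integers with `a₁ - a₁' = 1`,
`a₂ - a₂' = A - 2`, `a₃ - a₃' = -1`, the point `0.a₁a₂a₃\overline{0(B-1)}`
equals the point `0.a₁'a₂'a₃'\overline{(B-1)0}`. -/
theorem digit_expansion_identity
    (A B : ℤ) (hB : 2 ≤ B) (h3 : 2 * A - B = 3)
    (a₁ a₂ a₃ a₁' a₂' a₃' : ℤ)
    (hd1 : a₁ - a₁' = 1) (hd2 : a₂ - a₂' = A - 2) (hd3 : a₃ - a₃' = -1) :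
    ((M' A B)⁻¹ ^ 1).mulVec ((a₁ : ℝ) • e1) + ((M' A B)⁻¹ ^ 2).mulVec ((a₂ : ℝ) • e1)
      + ((M' A B)⁻¹ ^ 3).mulVec ((a₃ : ℝ) • e1)
      + ((B : ℝ) - 1) • ∑' k : ℕ, ((M' A B)⁻¹ ^ (5 + 2 * k)).mulVec e1 =
    ((M' A B)⁻¹ ^ 1).mulVec ((a₁' : ℝ) • e1) + ((M' A B)⁻¹ ^ 2).mulVec ((a₂' : ℝ) • e1)
      + ((M' A B)⁻¹ ^ 3).mulVec ((a₃' : ℝ) • e1)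
      + ((B : ℝ) - 1) • ∑' k : ℕ, ((M' A B)⁻¹ ^ (4 + 2 * k)).mulVec e1 := by
  have hBR : (2 : ℝ) ≤ B := by exact_mod_cast hB
  have hAR : 2 * (A : ℝ) - B = 3 := by exact_mod_cast h3
  set N := (M' A B)⁻¹
  have hdet : IsUnit (M' A B).det := by rw [M'_det]; exact (by positivity : (B : ℝ) ≠ 0).isUnit
  have hN : (B : ℝ) • N ^ 2 + (A : ℝ) • N + 1 = 0 :=
    smul_inv_sq_add_smul_inv_add_one_eq_zero hdet (M'_sq_add_smul_add_smul_eq_zero A B)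
  have hsp : |((A : ℝ) ^ 2 - 2 * B) / (B : ℝ) ^ 2| + |-1 / (B : ℝ) ^ 2| < 1 := by
    rw [abs_div, abs_div, abs_of_nonneg (by nlinarith), abs_neg, abs_one,
      abs_of_pos (by positivity), ← add_div, div_lt_one (by positivity)]
    nlinarith
  have hsum := summable_pow_mulVec_of_sq_eq (sq_sq_eq_of_smul_sq_add hN (by positivity)) hsp e1
  have hcarry := carry_identity hN hAR (tsum_pow_mulVec_eq_add hsum)
  rw [tsum_pow_add_two_mul_mulVec hsum, tsum_pow_add_two_mul_mulVec hsum]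
  obtain rfl : a₁ = a₁' + 1 := by omega
  obtain rfl : a₂ = a₂' + A - 2 := by omega
  obtain rfl : a₃ = a₃' - 1 := by omega
  simp only [mulVec_smul]
  push_cast
  linear_combination (norm := module) hcarry
end
end
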